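/- arXiv:2412.11759 — 4 statements merged into one kernel-verified Lean document; each statement's English description precedes it below -/
import Mathlib

section
/- The function rank_D defined on subsets S of [n] by rank_D(S) = min over families of pairwise disjoint nonempty subsets T_1,...,T_ℓ of S of [ Σ_i (rank_{M_1}(T_i) + rank_{M_2}(T_i) − 1) + |S \ (T_1 ∪ ... ∪ T_ℓ)| ] is the rank function of a matroid on [n]. -/
open Finset

/-- A matroid on the ground set `Fin n`, presented by its rank function. -/
structure FinMatroid (n : ℕ) where
  rank : Finset (Fin n) → ℕ
  rank_empty : rank ∅ = 0
  rank_le_card : ∀ S : Finset (Fin n), rank S ≤ S.card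
  rank_mono : ∀ ⦃S T : Finset (Fin n)⦄, S ⊆ T → rank S ≤ rank T
  rank_submod : ∀ S T : Finset (Fin n),
    rank (S ∪ T) + rank (S ∩ T) ≤ rank S + rank T

namespace FinMatroid

variable {n : ℕ}

/-- A set is independent if its rank equals its cardinality. -/
def Indep (M : FinMatroid n) (I : Finset (Fin n)) : Prop := M.rank I = I.card

/-- The rank of the matroid (rank of the full ground set). -/
def rk (M : FinMatroid n) : ℕ := M.rank Finset.univ

/-- A matroid is loopless if every singleton has positive rank. -/
def Loopless (M : FinMatroid n) : Prop := ∀ i : Fin n, 0 < M.rank {i}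

/-- Two matroids on `[n]` have no common loops. -/
def NoCommonLoops (M₁ M₂ : FinMatroid n) : Prop :=
  ∀ i : Fin n, 0 < M₁.rank {i} ∨ 0 < M₂.rank {i}

/-- A valid family for the Dilworth minimum: pairwise disjoint nonempty
subsets of `S`. -/
def ValidFamily (S : Finset (Fin n)) (𝒯 : Finset (Finset (Fin n))) : Prop :=
  (∀ T ∈ 𝒯, T ⊆ S ∧ T.Nonempty) ∧
    ∀ T ∈ 𝒯, ∀ T' ∈ 𝒯, T ≠ T' → Disjoint T T'

/-- The value `Σ_i (rank_{M₁}(T_i) + rank_{M₂}(T_i) − 1) + |S \ ∪ T_i|`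
associated to a family. -/
def famValue (M₁ M₂ : FinMatroid n) (S : Finset (Fin n))
    (𝒯 : Finset (Finset (Fin n))) : ℕ :=
  (∑ T ∈ 𝒯, (M₁.rank T + M₂.rank T - 1)) + (S \ 𝒯.sup id).card

/-- The rank function of the diagonal Dilworth truncation `D(M₁,M₂)`. -/
noncomputable def rankD (M₁ M₂ : FinMatroid n) (S : Finset (Fin n)) : ℕ :=
  sInf {v : ℕ | ∃ 𝒯 : Finset (Finset (Fin n)),
    ValidFamily S 𝒯 ∧ v = famValue M₁ M₂ S 𝒯}

/-- Independence in the diagonal Dilworth truncation. -/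
def IndepD (M₁ M₂ : FinMatroid n) (I : Finset (Fin n)) : Prop :=
  rankD M₁ M₂ I = I.card

/-- Circuits of the diagonal Dilworth truncation: minimal dependent sets. -/
def CircuitD (M₁ M₂ : FinMatroid n) (C : Finset (Fin n)) : Prop :=
  ¬ IndepD M₁ M₂ C ∧ ∀ C' : Finset (Fin n), C' ⊂ C → IndepD M₁ M₂ C'

end FinMatroid

/-!
A set `I` is independent in `D(M₁,M₂)` when `|A| + 1 ≤ r₁(A) + r₂(A)` for every nonempty
`A ⊆ I`. Such an `I ⊆ S` meets each part `T` of a family in at most `r₁(T) + r₂(T) - 1`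
elements (no common loops makes `r₁ + r₂ ≥ 1` on nonempty sets), so `|I| ≤ rank_D(S)`.
Conversely, if `I` is a maximal independent subset of `S`, call a nonempty `A ⊆ S` tight when
`r₁(A) + r₂(A) = |I ∩ A| + 1`. By submodularity, intersecting tight sets have a tight
union, so the maximal tight sets are pairwise disjoint, and by maximality of `I` they cover
`S \ I`; their family has value exactly `|I|`. Hence `rank_D(S)` is the size of any maximal
independent subset of `S`, and monotonicity and submodularity follow by extending a maximal
independent subset of `S ∩ T` to one of `S ∪ T`.
-/

namespace FinMatroid

variable {n : ℕ} (M₁ M₂ : FinMatroid n)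

def rankSum (A : Finset (Fin n)) : ℕ := M₁.rank A + M₂.rank A

variable {M₁ M₂}

lemma rankSum_mono {A B : Finset (Fin n)} (hAB : A ⊆ B) :
    rankSum M₁ M₂ A ≤ rankSum M₁ M₂ B :=
  Nat.add_le_add (M₁.rank_mono hAB) (M₂.rank_mono hAB)

variable (M₁ M₂) in
lemma rankSum_submod (A B : Finset (Fin n)) :
    rankSum M₁ M₂ (A ∪ B) + rankSum M₁ M₂ (A ∩ B) ≤
      rankSum M₁ M₂ A + rankSum M₁ M₂ B := by
  have h₁ := M₁.rank_submod A B
  have h₂ := M₂.rank_submod A B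
  unfold rankSum
  omega

lemma NoCommonLoops.one_le_rankSum (h : NoCommonLoops M₁ M₂) {A : Finset (Fin n)}
    (hA : A.Nonempty) : 1 ≤ rankSum M₁ M₂ A := by
  obtain ⟨i, hi⟩ := hA
  have hiA := rankSum_mono (M₁ := M₁) (M₂ := M₂) (singleton_subset_iff.mpr hi)
  unfold rankSum at hiA ⊢
  rcases h i with h' | h' <;> omega

variable (M₁ M₂) in
/-- Independence in `D(M₁,M₂)`, written as `|A| + 1 ≤ r₁(A) + r₂(A)` to avoid truncated
subtraction. -/
def DilworthIndep (I : Finset (Fin n)) : Prop :=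
  ∀ A ⊆ I, A.Nonempty → A.card + 1 ≤ rankSum M₁ M₂ A

lemma DilworthIndep.subset {I J : Finset (Fin n)} (hI : DilworthIndep M₁ M₂ I) (hJI : J ⊆ I) :
    DilworthIndep M₁ M₂ J :=
  fun A hA => hI A (hA.trans hJI)

lemma DilworthIndep.card_inter_add_one_le (h : NoCommonLoops M₁ M₂) {I X : Finset (Fin n)}
    (hI : DilworthIndep M₁ M₂ I) (hX : X.Nonempty) :
    (I ∩ X).card + 1 ≤ rankSum M₁ M₂ X := by
  rcases (I ∩ X).eq_empty_or_nonempty with hIX | hIX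
  · simpa [hIX] using h.one_le_rankSum hX
  · exact (hI _ inter_subset_left hIX).trans (rankSum_mono inter_subset_right)

lemma ValidFamily.card_eq_sum_card_inter_add {S : Finset (Fin n)} {𝒯 : Finset (Finset (Fin n))}
    (h𝒯 : ValidFamily S 𝒯) (I : Finset (Fin n)) :
    I.card = ∑ T ∈ 𝒯, (I ∩ T).card + (I \ 𝒯.sup id).card := by
  have hbiUnion : I ∩ 𝒯.sup id = 𝒯.biUnion (I ∩ ·) := by
    ext x
    simp only [mem_inter, mem_biUnion, mem_sup, id]
    tauto
  have hdisj : (𝒯 : Set (Finset (Fin n))).PairwiseDisjoint (I ∩ ·) :=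
    fun A hA B hB hAB => (h𝒯.2 A hA B hB hAB).mono inter_subset_right inter_subset_right
  rw [← card_biUnion hdisj, ← hbiUnion, card_inter_add_card_sdiff]

lemma card_le_famValue (h : NoCommonLoops M₁ M₂) {I S : Finset (Fin n)}
    {𝒯 : Finset (Finset (Fin n))} (hI : DilworthIndep M₁ M₂ I) (hIS : I ⊆ S)
    (h𝒯 : ValidFamily S 𝒯) : I.card ≤ famValue M₁ M₂ S 𝒯 := by
  have hT : ∀ T ∈ 𝒯, (I ∩ T).card ≤ M₁.rank T + M₂.rank T - 1 := fun T hT => by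
    have := hI.card_inter_add_one_le h (h𝒯.1 T hT).2
    unfold rankSum at this
    omega
  rw [h𝒯.card_eq_sum_card_inter_add I, famValue]
  exact Nat.add_le_add (sum_le_sum hT) (card_le_card (sdiff_subset_sdiff hIS le_rfl))

lemma rankD_le_famValue {S : Finset (Fin n)} {𝒯 : Finset (Finset (Fin n))}
    (h𝒯 : ValidFamily S 𝒯) : rankD M₁ M₂ S ≤ famValue M₁ M₂ S 𝒯 :=
  Nat.sInf_le ⟨𝒯, h𝒯, rfl⟩

lemma validFamily_empty (S : Finset (Fin n)) : ValidFamily S ∅ := by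
  simp [ValidFamily]

lemma rankD_le_card (S : Finset (Fin n)) : rankD M₁ M₂ S ≤ S.card := by
  simpa [famValue] using rankD_le_famValue (M₁ := M₁) (M₂ := M₂) (validFamily_empty S)

variable (M₁ M₂) in
lemma exists_validFamily_rankD_eq (S : Finset (Fin n)) :
    ∃ 𝒯, ValidFamily S 𝒯 ∧ rankD M₁ M₂ S = famValue M₁ M₂ S 𝒯 :=
  Nat.sInf_mem (s := {v | ∃ 𝒯, ValidFamily S 𝒯 ∧ v = famValue M₁ M₂ S 𝒯})
    ⟨_, ∅, validFamily_empty S, rfl⟩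

lemma card_le_rankD (h : NoCommonLoops M₁ M₂) {I S : Finset (Fin n)}
    (hI : DilworthIndep M₁ M₂ I) (hIS : I ⊆ S) : I.card ≤ rankD M₁ M₂ S := by
  obtain ⟨𝒯, h𝒯, hval⟩ := exists_validFamily_rankD_eq M₁ M₂ S
  exact hval ▸ card_le_famValue h hI hIS h𝒯

variable (M₁ M₂) in
def IsTight (S I A : Finset (Fin n)) : Prop :=
  A ⊆ S ∧ A.Nonempty ∧ rankSum M₁ M₂ A = (I ∩ A).card + 1

lemma IsTight.union (h : NoCommonLoops M₁ M₂) {S I A B : Finset (Fin n)}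
    (hI : DilworthIndep M₁ M₂ I) (hA : IsTight M₁ M₂ S I A) (hB : IsTight M₁ M₂ S I B)
    (hAB : (A ∩ B).Nonempty) : IsTight M₁ M₂ S I (A ∪ B) := by
  obtain ⟨hAS, hA, hAtight⟩ := hA
  obtain ⟨hBS, -, hBtight⟩ := hB
  have hAuB : (A ∪ B).Nonempty := hA.mono subset_union_left
  have hunion := hI.card_inter_add_one_le h hAuB
  have hinter := hI.card_inter_add_one_le h hAB
  have hsubmod := rankSum_submod M₁ M₂ A B
  have hcard := card_union_add_card_inter (I ∩ A) (I ∩ B)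
  rw [← inter_union_distrib_left, ← inter_inter_distrib_left] at hcard
  exact ⟨union_subset hAS hBS, hAuB, by omega⟩

/-- A witness `A ⊆ insert x I` of the dependence of `insert x I` contains `x`, as subsets of `I`
satisfy the bound, and is tight since `I ∩ A = A \ {x}`. -/
lemma exists_isTight_of_not_dilworthIndep_insert (h : NoCommonLoops M₁ M₂) {I : Finset (Fin n)}
    {x : Fin n} (hI : DilworthIndep M₁ M₂ I) (hxI : x ∉ I)
    (hdep : ¬ DilworthIndep M₁ M₂ (insert x I)) :
    ∃ A ⊆ insert x I, x ∈ A ∧ A.Nonempty ∧ rankSum M₁ M₂ A = (I ∩ A).card + 1 := by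
  simp only [DilworthIndep, not_forall, not_le, exists_prop] at hdep
  obtain ⟨A, hAxI, hA, hrank⟩ := hdep
  have hxA : x ∈ A := by
    by_contra hxA
    have hAI : A ⊆ I := fun y hy => (mem_insert.mp (hAxI hy)).resolve_left (by grind)
    exact absurd (hI A hAI hA) (by omega)
  have hIA : I ∩ A = A.erase x := by
    ext y
    have := @hAxI y
    grind
  have hcard : (I ∩ A).card + 1 = A.card := by rw [hIA, card_erase_add_one hxA]
  have hbound := hI.card_inter_add_one_le h hA
  exact ⟨A, hAxI, hxA, hA, by omega⟩

/-- The witness is the family of maximal tight sets. -/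
lemma exists_validFamily_famValue_eq_card (h : NoCommonLoops M₁ M₂) {I S : Finset (Fin n)}
    (hImax : Maximal (fun J => J ⊆ S ∧ DilworthIndep M₁ M₂ J) I) :
    ∃ 𝒯, ValidFamily S 𝒯 ∧ famValue M₁ M₂ S 𝒯 = I.card := by
  classical
  obtain ⟨hIS, hI⟩ := hImax.1
  set 𝒯 := {A ∈ S.powerset | Maximal (IsTight M₁ M₂ S I) A} with h𝒯
  have mem_𝒯 {A} : A ∈ 𝒯 ↔ Maximal (IsTight M₁ M₂ S I) A := by
    simpa [h𝒯] using fun hA : Maximal _ A => hA.1.1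
  have hvalid : ValidFamily S 𝒯 := by
    refine ⟨fun T hT => ?_, fun A hA B hB hAB => ?_⟩
    · exact ⟨(mem_𝒯.mp hT).1.1, (mem_𝒯.mp hT).1.2.1⟩
    rw [mem_𝒯] at hA hB
    by_contra hnd
    have hAuB := hA.1.union h hI hB.1 (not_disjoint_iff_nonempty_inter.mp hnd)
    exact hAB ((hA.eq_of_le hAuB subset_union_left).trans
      (hB.eq_of_le hAuB subset_union_right).symm)
  have hcover : S \ I ⊆ 𝒯.sup id := by
    intro x hx
    obtain ⟨hxS, hxI⟩ := mem_sdiff.mp hx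
    have hdep : ¬ DilworthIndep M₁ M₂ (insert x I) := fun hxIind =>
      hxI (hImax.eq_of_le ⟨insert_subset hxS hIS, hxIind⟩ (subset_insert x I) ▸
        mem_insert_self x I)
    obtain ⟨A, hAxI, hxA, hA, hrank⟩ := exists_isTight_of_not_dilworthIndep_insert h hI hxI hdep
    obtain ⟨B, hAB, hB⟩ := Finite.exists_le_maximal
      (p := IsTight M₁ M₂ S I) ⟨hAxI.trans (insert_subset hxS hIS), hA, hrank⟩
    exact mem_sup.mpr ⟨B, mem_𝒯.mpr hB, hAB hxA⟩
  have hsum : ∑ T ∈ 𝒯, (M₁.rank T + M₂.rank T - 1) = ∑ T ∈ 𝒯, (I ∩ T).card :=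
    sum_congr rfl fun T hT => by
      have := (mem_𝒯.mp hT).1.2.2
      unfold rankSum at this
      omega
  have hrest : S \ 𝒯.sup id = I \ 𝒯.sup id := by
    ext x
    have := @hcover x
    have := @hIS x
    grind
  refine ⟨𝒯, hvalid, ?_⟩
  rw [famValue, hsum, hrest, ← hvalid.card_eq_sum_card_inter_add]

lemma rankD_eq_card_of_maximal (h : NoCommonLoops M₁ M₂) {I S : Finset (Fin n)}
    (hImax : Maximal (fun J => J ⊆ S ∧ DilworthIndep M₁ M₂ J) I) :
    rankD M₁ M₂ S = I.card := by
  obtain ⟨𝒯, h𝒯, hval⟩ := exists_validFamily_famValue_eq_card h hImax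
  exact le_antisymm (hval ▸ rankD_le_famValue h𝒯) (card_le_rankD h hImax.1.2 hImax.1.1)

variable (M₁ M₂) in
lemma dilworthIndep_empty : DilworthIndep M₁ M₂ ∅ :=
  fun _ hA hne => absurd (subset_empty.mp hA) hne.ne_empty

lemma exists_maximal_dilworthIndep_superset {I S : Finset (Fin n)} (hIS : I ⊆ S)
    (hI : DilworthIndep M₁ M₂ I) :
    ∃ J, I ⊆ J ∧ Maximal (fun J => J ⊆ S ∧ DilworthIndep M₁ M₂ J) J :=
  Finite.exists_le_maximal (p := fun J => J ⊆ S ∧ DilworthIndep M₁ M₂ J) ⟨hIS, hI⟩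

lemma rankD_mono (h : NoCommonLoops M₁ M₂) {S T : Finset (Fin n)} (hST : S ⊆ T) :
    rankD M₁ M₂ S ≤ rankD M₁ M₂ T := by
  obtain ⟨I, -, hImax⟩ := exists_maximal_dilworthIndep_superset (empty_subset S)
    (dilworthIndep_empty M₁ M₂)
  rw [rankD_eq_card_of_maximal h hImax]
  exact card_le_rankD h hImax.1.2 (hImax.1.1.trans hST)

lemma rankD_submod (h : NoCommonLoops M₁ M₂) (S T : Finset (Fin n)) :
    rankD M₁ M₂ (S ∪ T) + rankD M₁ M₂ (S ∩ T) ≤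
      rankD M₁ M₂ S + rankD M₁ M₂ T := by
  obtain ⟨I, -, hImax⟩ := exists_maximal_dilworthIndep_superset (empty_subset (S ∩ T))
    (dilworthIndep_empty M₁ M₂)
  obtain ⟨J, hIJ, hJmax⟩ :=
    exists_maximal_dilworthIndep_superset (hImax.1.1.trans inter_subset_union) hImax.1.2
  have hJI : J ∩ (S ∩ T) = I := (hImax.eq_of_le ⟨inter_subset_right,
    hJmax.1.2.subset inter_subset_left⟩ (subset_inter hIJ hImax.1.1)).symm
  have hcard := card_union_add_card_inter (J ∩ S) (J ∩ T)
  rw [← inter_union_distrib_left, inter_eq_left.mpr hJmax.1.1, ← inter_inter_distrib_left,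
    hJI] at hcard
  have hS : (J ∩ S).card ≤ rankD M₁ M₂ S :=
    card_le_rankD h (hJmax.1.2.subset inter_subset_left) inter_subset_right
  have hT : (J ∩ T).card ≤ rankD M₁ M₂ T :=
    card_le_rankD h (hJmax.1.2.subset inter_subset_left) inter_subset_right
  rw [rankD_eq_card_of_maximal h hJmax, rankD_eq_card_of_maximal h hImax]
  omega

variable (M₁ M₂) in
noncomputable def dilworthTruncation (h : NoCommonLoops M₁ M₂) : FinMatroid n where
  rank := rankD M₁ M₂
  rank_empty := Nat.le_zero.mp (rankD_le_card ∅)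
  rank_le_card := rankD_le_card
  rank_mono _ _ := rankD_mono h
  rank_submod := rankD_submod h

end FinMatroid

open FinMatroid in
/-- The function `rank_D` is the rank function of a matroid on `[n]`. -/
theorem rankD_is_matroid_rank (n : ℕ) (M₁ M₂ : FinMatroid n)
    (h : NoCommonLoops M₁ M₂) :
    ∃ D : FinMatroid n, D.rank = rankD M₁ M₂ :=
  ⟨dilworthTruncation M₁ M₂ h, rfl⟩
end

section
/- Suppose D(M_1,M_2) has expected rank, i.e. rank(D(M_1,M_2)) = rank(M_1) + rank(M_2) − 1, and this rank is positive. Then every spanning set of D(M_1,M_2) is a spanning set of both M_1 and M_2. -/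
open Finset

open FinMatroid in
/-- If `D(M₁,M₂)` has (positive) expected rank `rank(M₁) + rank(M₂) − 1`, then
every spanning set of `D(M₁,M₂)` spans both `M₁` and `M₂`. -/
theorem spanningD_spans_both (n : ℕ) (M₁ M₂ : FinMatroid n)
    (h : NoCommonLoops M₁ M₂)
    (hexp : rankD M₁ M₂ Finset.univ + 1 = M₁.rk + M₂.rk)
    (hpos : 0 < rankD M₁ M₂ Finset.univ)
    (S : Finset (Fin n)) (hS : rankD M₁ M₂ S = rankD M₁ M₂ Finset.univ) :
    M₁.rank S = M₁.rk ∧ M₂.rank S = M₂.rk := by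
  classical
  have hSne : S.Nonempty := by
    by_contra hne
    rw [Finset.not_nonempty_iff_eq_empty] at hne
    subst hne
    have h0 : rankD M₁ M₂ (∅ : Finset (Fin n)) ≤ 0 := by
      apply Nat.sInf_le
      exact ⟨∅, ⟨by simp [ValidFamily], by simp [famValue]⟩⟩
    omega
  have hle : rankD M₁ M₂ S ≤ M₁.rank S + M₂.rank S - 1 := by
    apply Nat.sInf_le
    refine ⟨{S}, ⟨?_, ?_⟩, ?_⟩
    · intro T hT
      simp only [Finset.mem_singleton] at hT
      subst hT
      exact ⟨subset_rfl, hSne⟩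
    · intro T hT T' hT' hne
      simp only [Finset.mem_singleton] at hT hT'
      subst hT; subst hT'
      exact absurd rfl hne
    · simp [famValue]
  have h1 : M₁.rank S ≤ M₁.rk := M₁.rank_mono (Finset.subset_univ S)
  have h2 : M₂.rank S ≤ M₂.rk := M₂.rank_mono (Finset.subset_univ S)
  exact ⟨by omega, by omega⟩
end

section
/- Assume M_2 has no loops and D(M_1,M_2) does not have expected rank, i.e. rank(D(M_1,M_2)) < rank(M_1) + rank(M_2) − 1. Then the underlying matroid of D(M_1,M_2) equals that of D(M_1, tr M_2), where tr M_2 is the truncation of M_2 (whose independent sets are the independent sets of M_2 of cardinality strictly less than rank(M_2)). -/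
open Finset

namespace FinMatroid
variable {n : ℕ}

lemma rank_subadd (M : FinMatroid n) (A B : Finset (Fin n)) :
    M.rank (A ∪ B) ≤ M.rank A + M.rank B :=
  le_trans (Nat.le_add_right _ _) (M.rank_submod A B)

lemma rank_union_le_card (M : FinMatroid n) (A B : Finset (Fin n)) :
    M.rank (A ∪ B) ≤ M.rank A + B.card :=
  (rank_subadd M A B).trans (Nat.add_le_add_left (M.rank_le_card B) _)

lemma telescope (M : FinMatroid n) (P : Finset (Fin n)) (𝒮 : Finset (Finset (Fin n))) :
    (∑ W ∈ 𝒮, M.rank (W ∩ P)) + M.rank (P ∪ 𝒮.sup id) ≤ (∑ W ∈ 𝒮, M.rank W) + M.rank P := by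
  induction 𝒮 using Finset.cons_induction with
  | empty => simp
  | cons W 𝒮 hW ih =>
    simp only [Finset.sum_cons, Finset.sup_cons, id_eq, Finset.sup_eq_union] at *
    have hsub := M.rank_submod W (P ∪ 𝒮.sup id)
    have hm : M.rank (W ∩ P) ≤ M.rank (W ∩ (P ∪ 𝒮.sup id)) :=
      M.rank_mono (by intro x hx; simp only [Finset.mem_inter, Finset.mem_union] at hx ⊢; tauto)
    have hu : M.rank (P ∪ (W ∪ 𝒮.sup id)) = M.rank (W ∪ (P ∪ 𝒮.sup id)) := by
      rw [Finset.union_left_comm]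
    omega

lemma rankD_set_nonempty (M₁ M₂ : FinMatroid n) (S : Finset (Fin n)) :
    {v : ℕ | ∃ 𝒯 : Finset (Finset (Fin n)),
      ValidFamily S 𝒯 ∧ v = famValue M₁ M₂ S 𝒯}.Nonempty :=
  ⟨famValue M₁ M₂ S ∅, ∅, ⟨by simp, by simp⟩, rfl⟩

lemma rankD_le (M₁ M₂ : FinMatroid n) {S : Finset (Fin n)} {𝒯 : Finset (Finset (Fin n))}
    (h : ValidFamily S 𝒯) : rankD M₁ M₂ S ≤ famValue M₁ M₂ S 𝒯 :=
  Nat.sInf_le ⟨𝒯, h, rfl⟩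

lemma rankD_witness (M₁ M₂ : FinMatroid n) (S : Finset (Fin n)) :
    ∃ 𝒯 : Finset (Finset (Fin n)), ValidFamily S 𝒯 ∧ rankD M₁ M₂ S = famValue M₁ M₂ S 𝒯 :=
  Nat.sInf_mem (rankD_set_nonempty M₁ M₂ S)

lemma one_le_rank (M : FinMatroid n) (h : M.Loopless) {P : Finset (Fin n)} (hP : P.Nonempty) :
    1 ≤ M.rank P := by
  obtain ⟨x, hx⟩ := hP
  exact le_trans (h x) (M.rank_mono (Finset.singleton_subset_iff.2 hx))

lemma val_add_card (M₁ M₂ : FinMatroid n) (h2 : M₂.Loopless) {𝒯 : Finset (Finset (Fin n))}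
    (h : ∀ T ∈ 𝒯, T.Nonempty) :
    (∑ T ∈ 𝒯, (M₁.rank T + M₂.rank T - 1)) + 𝒯.card = ∑ T ∈ 𝒯, (M₁.rank T + M₂.rank T) := by
  rw [Finset.card_eq_sum_ones, ← Finset.sum_add_distrib]
  refine Finset.sum_congr rfl fun T hT => ?_
  have := one_le_rank M₂ h2 (h T hT)
  omega

lemma rankD_le_single (M₁ M₂ : FinMatroid n) {P : Finset (Fin n)} (hP : P.Nonempty) :
    rankD M₁ M₂ P ≤ M₁.rank P + M₂.rank P - 1 := by
  have h : ValidFamily P ({P} : Finset (Finset (Fin n))) := by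
    constructor
    · intro T hT; simp only [Finset.mem_singleton] at hT; subst hT; exact ⟨le_refl _, hP⟩
    · intro T hT T' hT' hne
      simp only [Finset.mem_singleton] at hT hT'; subst hT; subst hT'; exact absurd rfl hne
  have := rankD_le M₁ M₂ h
  simpa [famValue] using this

end FinMatroid
namespace FinMatroid
variable {n : ℕ}

lemma rankD_subadd (M₁ M₂ : FinMatroid n) {S : Finset (Fin n)} {𝒯 : Finset (Finset (Fin n))}
    (h : ValidFamily S 𝒯) :
    rankD M₁ M₂ S ≤ (∑ P ∈ 𝒯, rankD M₁ M₂ P) + (S \ 𝒯.sup id).card := by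
  choose 𝒲 hv he using rankD_witness M₁ M₂
  set 𝒰 : Finset (Finset (Fin n)) := 𝒯.biUnion 𝒲 with h𝒰
  have hval : ValidFamily S 𝒰 := by
    constructor
    · intro X hX
      simp only [h𝒰, Finset.mem_biUnion] at hX
      obtain ⟨P, hP, hXP⟩ := hX
      exact ⟨((hv P).1 X hXP).1.trans (h.1 P hP).1, ((hv P).1 X hXP).2⟩
    · intro X hX X' hX' hne
      simp only [h𝒰, Finset.mem_biUnion] at hX hX'
      obtain ⟨P, hP, hXP⟩ := hX
      obtain ⟨P', hP', hXP'⟩ := hX'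
      by_cases hPP : P = P'
      · subst hPP; exact (hv P).2 X hXP X' hXP' hne
      · exact Finset.disjoint_of_subset_left ((hv P).1 X hXP).1
          (Finset.disjoint_of_subset_right ((hv P').1 X' hXP').1 (h.2 P hP P' hP' hPP))
  refine (rankD_le M₁ M₂ hval).trans ?_
  have hdisj : (↑𝒯 : Set (Finset (Fin n))).PairwiseDisjoint 𝒲 := by
    intro P hP P' hP' hne
    simp only [Finset.mem_coe] at hP hP'
    rw [Function.onFun, Finset.disjoint_left]
    intro X hX hX'
    obtain ⟨x, hx⟩ := ((hv P).1 X hX).2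
    exact (Finset.disjoint_left.1 (h.2 P hP P' hP' hne))
      (((hv P).1 X hX).1 hx) (((hv P').1 X hX').1 hx)
  have hsum : ∑ X ∈ 𝒰, (M₁.rank X + M₂.rank X - 1)
      = ∑ P ∈ 𝒯, ∑ X ∈ 𝒲 P, (M₁.rank X + M₂.rank X - 1) :=
    Finset.sum_biUnion hdisj
  have hcover : S \ 𝒰.sup id ⊆ (S \ 𝒯.sup id) ∪ 𝒯.biUnion (fun P => P \ (𝒲 P).sup id) := by
    intro x hx
    simp only [Finset.mem_sdiff, Finset.mem_union, Finset.mem_biUnion] at hx ⊢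
    obtain ⟨hxS, hx𝒰⟩ := hx
    by_cases hxT : x ∈ 𝒯.sup id
    · right
      rw [Finset.mem_sup] at hxT
      obtain ⟨P, hP, hxP⟩ := hxT
      refine ⟨P, hP, hxP, fun hxw => hx𝒰 ?_⟩
      rw [Finset.mem_sup] at hxw ⊢
      obtain ⟨X, hX, hxX⟩ := hxw
      exact ⟨X, Finset.mem_biUnion.2 ⟨P, hP, hX⟩, hxX⟩
    · exact Or.inl ⟨hxS, hxT⟩
  have hcard : (S \ 𝒰.sup id).card
      ≤ (S \ 𝒯.sup id).card + ∑ P ∈ 𝒯, (P \ (𝒲 P).sup id).card :=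
    le_trans (Finset.card_le_card hcover)
      (le_trans (Finset.card_union_le _ _)
        (Nat.add_le_add_left (Finset.card_biUnion_le) _))
  have : famValue M₁ M₂ S 𝒰
      ≤ ∑ P ∈ 𝒯, (∑ X ∈ 𝒲 P, (M₁.rank X + M₂.rank X - 1) + (P \ (𝒲 P).sup id).card)
        + (S \ 𝒯.sup id).card := by
    rw [famValue, hsum, Finset.sum_add_distrib]
    omega
  refine this.trans ?_
  have : ∀ P ∈ 𝒯, (∑ X ∈ 𝒲 P, (M₁.rank X + M₂.rank X - 1) + (P \ (𝒲 P).sup id).card)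
      = rankD M₁ M₂ P := fun P _ => ((he P).trans rfl).symm
  rw [Finset.sum_congr rfl this]


lemma core (M₁ M₂ : FinMatroid n) (h2 : M₂.Loopless)
    (hlt : rankD M₁ M₂ Finset.univ + 1 < M₁.rk + M₂.rk)
    {P : Finset (Fin n)} (hfull : M₂.rk ≤ M₂.rank P) :
    rankD M₁ M₂ P + 2 ≤ M₁.rank P + M₂.rk := by
  obtain ⟨𝒮, h𝒮, he⟩ := rankD_witness M₁ M₂ (Finset.univ : Finset (Fin n))
  set 𝒮' : Finset (Finset (Fin n)) := 𝒮.filter (fun W => (W ∩ P).Nonempty) with h𝒮'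
  have h𝒮'sub : 𝒮' ⊆ 𝒮 := Finset.filter_subset _ _
  set 𝒲 : Finset (Finset (Fin n)) := 𝒮'.image (· ∩ P) with h𝒲
  set U : Finset (Fin n) := 𝒮.sup id with hU
  -- P is nonempty
  have hrkP : M₂.rank P = M₂.rk :=
    le_antisymm (M₂.rank_mono (Finset.subset_univ P)) hfull
  -- injectivity of (· ∩ P) on 𝒮'
  have hinj : Set.InjOn (· ∩ P) ↑𝒮' := by
    intro W hW W' hW' heq
    simp only [Finset.coe_filter, Set.mem_setOf_eq, h𝒮'] at hW hW'
    by_contra hne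
    have hd := h𝒮.2 W hW.1 W' hW'.1 hne
    have : Disjoint (W ∩ P) (W' ∩ P) :=
      Finset.disjoint_of_subset_left (Finset.inter_subset_left)
        (Finset.disjoint_of_subset_right (Finset.inter_subset_left) hd)
    have heq' : W ∩ P = W' ∩ P := heq
    rw [heq'] at this
    obtain ⟨x, hx⟩ := hW'.2
    exact (Finset.disjoint_left.1 this) hx hx
  -- validity of 𝒲 for P
  have hvalW : ValidFamily P 𝒲 := by
    constructor
    · intro X hX
      simp only [h𝒲, Finset.mem_image] at hX
      obtain ⟨W, hW, rfl⟩ := hX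
      simp only [h𝒮', Finset.mem_filter] at hW
      exact ⟨Finset.inter_subset_right, hW.2⟩
    · intro X hX X' hX' hne
      simp only [h𝒲, Finset.mem_image] at hX hX'
      obtain ⟨W, hW, rfl⟩ := hX
      obtain ⟨W', hW', rfl⟩ := hX'
      have hWW' : W ≠ W' := fun hh => hne (by rw [hh])
      simp only [h𝒮', Finset.mem_filter] at hW hW'
      exact Finset.disjoint_of_subset_left (Finset.inter_subset_left)
        (Finset.disjoint_of_subset_right (Finset.inter_subset_left)
          (h𝒮.2 W hW.1 W' hW'.1 hWW'))
  -- leftover identification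
  have hPsup : P \ 𝒲.sup id = P \ U := by
    ext x
    simp only [Finset.mem_sdiff]
    refine and_congr_right fun hxP => not_congr ?_
    rw [hU, Finset.mem_sup, Finset.mem_sup]
    constructor
    · rintro ⟨X, hX, hxX⟩
      rw [h𝒲, Finset.mem_image] at hX
      obtain ⟨W, hW, rfl⟩ := hX
      exact ⟨W, h𝒮'sub hW, (Finset.mem_inter.1 hxX).1⟩
    · rintro ⟨W, hW, hxW⟩
      refine ⟨W ∩ P, ?_, Finset.mem_inter.2 ⟨hxW, hxP⟩⟩
      rw [h𝒲, Finset.mem_image]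
      exact ⟨W, Finset.mem_filter.2 ⟨hW, ⟨x, Finset.mem_inter.2 ⟨hxW, hxP⟩⟩⟩, rfl⟩
  -- quantities
  have hSne : ∀ W ∈ 𝒮, W.Nonempty := fun W hW => (h𝒮.1 W hW).2
  -- f1 : telescoping for M₁ over 𝒮
  have f1 := telescope M₁ P 𝒮
  rw [← hU] at f1
  -- sums over 𝒮 vs 𝒮' : terms outside 𝒮' vanish
  have hzero : ∀ (M : FinMatroid n), ∀ W ∈ 𝒮, W ∉ 𝒮' → M.rank (W ∩ P) = 0 := by
    intro M W hW hW'
    simp only [h𝒮', Finset.mem_filter, hW, true_and] at hW'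
    rw [Finset.not_nonempty_iff_eq_empty.1 hW', M.rank_empty]
  have hsum1 : ∑ W ∈ 𝒮', M₁.rank (W ∩ P) = ∑ W ∈ 𝒮, M₁.rank (W ∩ P) :=
    Finset.sum_subset h𝒮'sub (hzero M₁)
  have hsum2 : ∑ W ∈ 𝒮', M₂.rank (W ∩ P) = ∑ W ∈ 𝒮, M₂.rank (W ∩ P) :=
    Finset.sum_subset h𝒮'sub (hzero M₂)
  -- f2 : b + k ≤ B + k'
  have ht2 := telescope M₂ P 𝒮'
  have hge : M₂.rk ≤ M₂.rank (P ∪ 𝒮'.sup id) := by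
    rw [← hrkP]; exact M₂.rank_mono Finset.subset_union_left
  have hb : ∑ W ∈ 𝒮', M₂.rank (W ∩ P) ≤ ∑ W ∈ 𝒮', M₂.rank W := by
    have : M₂.rank P = M₂.rk := hrkP
    omega
  have hsplit : ∑ W ∈ 𝒮, M₂.rank W
      = ∑ W ∈ 𝒮', M₂.rank W + ∑ W ∈ 𝒮.filter (fun W => ¬ (W ∩ P).Nonempty), M₂.rank W :=
    (Finset.sum_filter_add_sum_filter_not 𝒮 _ _).symm
  have hkk : 𝒮'.card + (𝒮.filter (fun W => ¬ (W ∩ P).Nonempty)).card = 𝒮.card :=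
    Finset.card_filter_add_card_filter_not _
  have hone : (𝒮.filter (fun W => ¬ (W ∩ P).Nonempty)).card
      ≤ ∑ W ∈ 𝒮.filter (fun W => ¬ (W ∩ P).Nonempty), M₂.rank W := by
    rw [Finset.card_eq_sum_ones]
    exact Finset.sum_le_sum fun W hW =>
      one_le_rank M₂ h2 (hSne W (Finset.mem_filter.1 hW).1)
  have f2 : (∑ W ∈ 𝒮, M₂.rank (W ∩ P)) + 𝒮.card ≤ (∑ W ∈ 𝒮, M₂.rank W) + 𝒮'.card := by
    omega
  have hl : ∑ T ∈ 𝒮, (M₁.rank T + M₂.rank T)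
      = ∑ W ∈ 𝒮, M₁.rank W + ∑ W ∈ 𝒮, M₂.rank W := Finset.sum_add_distrib
  -- f3 : val 𝒮 + k = A + B
  have f3 := val_add_card M₁ M₂ h2 hSne
  -- f4 : val 𝒲 + k' = a + b
  have himg : ∑ X ∈ 𝒲, (M₁.rank X + M₂.rank X)
      = ∑ W ∈ 𝒮', (M₁.rank (W ∩ P) + M₂.rank (W ∩ P)) := by
    rw [h𝒲, Finset.sum_image (fun W hW W' hW' => hinj hW hW')]
  have hWcard : 𝒲.card = 𝒮'.card := Finset.card_image_of_injOn hinj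
  have hWne : ∀ X ∈ 𝒲, X.Nonempty := fun X hX => (hvalW.1 X hX).2
  have f4 : (∑ X ∈ 𝒲, (M₁.rank X + M₂.rank X - 1)) + 𝒮'.card
      = (∑ W ∈ 𝒮, M₁.rank (W ∩ P)) + (∑ W ∈ 𝒮, M₂.rank (W ∩ P)) := by
    rw [← hWcard, val_add_card M₁ M₂ h2 hWne, himg, Finset.sum_add_distrib, hsum1, hsum2]
  -- f5 : rankD P ≤ val 𝒲 + |P \ U|
  have f5 : rankD M₁ M₂ P ≤ (∑ X ∈ 𝒲, (M₁.rank X + M₂.rank X - 1)) + (P \ U).card := by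
    have := rankD_le M₁ M₂ hvalW
    rwa [famValue, hPsup] at this
  -- f6
  have f6 : (∑ W ∈ 𝒮, (M₁.rank W + M₂.rank W - 1)) + ((Finset.univ : Finset (Fin n)) \ U).card + 2
      ≤ M₁.rk + M₂.rk := by
    have hfv : famValue M₁ M₂ Finset.univ 𝒮
        = (∑ W ∈ 𝒮, (M₁.rank W + M₂.rank W - 1)) + ((Finset.univ : Finset (Fin n)) \ U).card := rfl
    omega
  -- f7
  have f7 : M₁.rk + (P \ U).card ≤ M₁.rank (P ∪ U) + ((Finset.univ : Finset (Fin n)) \ U).card := by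
    have hcup : (P ∪ U) ∪ ((Finset.univ : Finset (Fin n)) \ (P ∪ U)) = Finset.univ :=
      Finset.union_sdiff_of_subset (Finset.subset_univ _)
    have h1 : M₁.rk ≤ M₁.rank (P ∪ U) + ((Finset.univ : Finset (Fin n)) \ (P ∪ U)).card := by
      have := rank_union_le_card M₁ (P ∪ U) ((Finset.univ : Finset (Fin n)) \ (P ∪ U))
      rwa [hcup] at this
    have h2' : ((Finset.univ : Finset (Fin n)) \ (P ∪ U)).card + (P \ U).card
        = ((Finset.univ : Finset (Fin n)) \ U).card := by
      have hsub : P \ U ⊆ (Finset.univ : Finset (Fin n)) \ U := by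
        intro x hx
        simp only [Finset.mem_sdiff, Finset.mem_univ, true_and] at hx ⊢
        exact hx.2
      have heq : (Finset.univ : Finset (Fin n)) \ (P ∪ U)
          = ((Finset.univ : Finset (Fin n)) \ U) \ (P \ U) := by
        ext x; simp only [Finset.mem_sdiff, Finset.mem_union, Finset.mem_univ, true_and]; tauto
      rw [heq, Finset.card_sdiff_of_subset hsub]
      have := Finset.card_le_card hsub
      omega
    omega
  omega

end FinMatroid


open FinMatroid in
/-- If `M₂` is loopless and `D(M₁,M₂)` does not have expected rank, then the
underlying matroids of `D(M₁,M₂)` and `D(M₁, tr M₂)` coincide, where `tr M₂`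
is the truncation of `M₂`, with rank function `S ↦ min (rank_{M₂} S) (rk M₂ − 1)`. -/
theorem rankD_truncation (n : ℕ) (M₁ M₂ : FinMatroid n)
    (hM₂ : M₂.Loopless) (hrk : 1 ≤ M₂.rk)
    (hlt : rankD M₁ M₂ Finset.univ + 1 < M₁.rk + M₂.rk)
    (T : FinMatroid n)
    (hT : ∀ S : Finset (Fin n), T.rank S = min (M₂.rank S) (M₂.rk - 1)) :
    ∀ S : Finset (Fin n), rankD M₁ T S = rankD M₁ M₂ S := by
  intro S
  apply le_antisymm
  · obtain ⟨𝒯, hv, he⟩ := rankD_witness M₁ M₂ S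
    rw [he]
    refine (rankD_le M₁ T hv).trans ?_
    unfold famValue
    refine Nat.add_le_add_right (Finset.sum_le_sum fun P hP => ?_) _
    have : T.rank P ≤ M₂.rank P := by rw [hT]; exact min_le_left _ _
    omega
  · obtain ⟨𝒯, hv, he⟩ := rankD_witness M₁ T S
    rw [he]
    refine (rankD_subadd M₁ M₂ hv).trans ?_
    unfold famValue
    refine Nat.add_le_add_right (Finset.sum_le_sum fun P hP => ?_) _
    have hPne : P.Nonempty := (hv.1 P hP).2
    rw [hT]
    by_cases hc : M₂.rk ≤ M₂.rank P
    · have hmin : min (M₂.rank P) (M₂.rk - 1) = M₂.rk - 1 := min_eq_right (by omega)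
      have := core M₁ M₂ hM₂ hlt hc
      omega
    · have hmin : min (M₂.rank P) (M₂.rk - 1) = M₂.rank P := min_eq_left (by omega)
      have := rankD_le_single M₁ M₂ hPne
      have h1 := one_le_rank M₂ hM₂ hPne
      omega
end

section
/- If M is a loopless matroid on [n] and D(M,M) has expected rank, i.e. rank(D(M,M)) = 2·rank(M) − 1, then M is connected. -/
open Finset

open FinMatroid in
/-- If `M` is loopless and `D(M,M)` has expected rank `2·rank(M) − 1`, then `M`
is connected: it admits no proper nonempty separator. -/
theorem expected_rank_implies_connected (n : ℕ) (M : FinMatroid n)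
    (hM : M.Loopless)
    (hexp : rankD M M Finset.univ + 1 = 2 * M.rk) :
    ∀ T : Finset (Fin n), T.Nonempty → T ≠ Finset.univ →
      ¬ (∀ A : Finset (Fin n),
          M.rank A = M.rank (A ∩ T) + M.rank (A \ T)) := by
  intro T hTne hTuniv hsep
  obtain ⟨i, hi⟩ := hTne
  have hTc : (Finset.univ \ T).Nonempty :=
    Finset.sdiff_nonempty.mpr fun h => hTuniv (Finset.univ_subset_iff.mp h)
  obtain ⟨j, hj⟩ := hTc
  have haT : 1 ≤ M.rank T :=
    le_trans (hM i) (M.rank_mono (Finset.singleton_subset_iff.mpr hi))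
  have hbT : 1 ≤ M.rank (Finset.univ \ T) :=
    le_trans (hM j) (M.rank_mono (Finset.singleton_subset_iff.mpr hj))
  have hrk : M.rk = M.rank T + M.rank (Finset.univ \ T) := by
    have := hsep Finset.univ
    rwa [Finset.univ_inter] at this
  have hne : T ≠ Finset.univ \ T := by
    intro h
    exact (Finset.mem_sdiff.mp (h ▸ hi)).2 hi
  set 𝒯 : Finset (Finset (Fin n)) := {T, Finset.univ \ T} with h𝒯
  have hvalid : ValidFamily Finset.univ 𝒯 := by
    constructor
    · intro S hS
      simp only [h𝒯, Finset.mem_insert, Finset.mem_singleton] at hS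
      rcases hS with rfl | rfl
      · exact ⟨Finset.subset_univ _, ⟨i, hi⟩⟩
      · exact ⟨Finset.subset_univ _, ⟨j, hj⟩⟩
    · intro A hA B hB hAB
      simp only [h𝒯, Finset.mem_insert, Finset.mem_singleton] at hA hB
      rcases hA with rfl | rfl <;> rcases hB with rfl | rfl
      · exact absurd rfl hAB
      · exact Finset.disjoint_sdiff
      · exact Finset.sdiff_disjoint
      · exact absurd rfl hAB
  have hsup : 𝒯.sup id = Finset.univ := by
    simp only [h𝒯, Finset.sup_insert, Finset.sup_singleton, id]
    exact Finset.union_sdiff_of_subset (Finset.subset_univ T)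
  have hval : famValue M M Finset.univ 𝒯 =
      (M.rank T + M.rank T - 1) + (M.rank (Finset.univ \ T) + M.rank (Finset.univ \ T) - 1) := by
    unfold famValue
    rw [hsup, Finset.sdiff_self, Finset.card_empty, Finset.sum_pair hne, Nat.add_zero]
  have hle : rankD M M Finset.univ ≤ famValue M M Finset.univ 𝒯 :=
    Nat.sInf_le ⟨𝒯, hvalid, rfl⟩
  rw [hval] at hle
  omega
end
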